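/- Let r ≥ 1 and let μ be a probability law on A^r that is stationary-consistent, i.e. ∑_{a∈A} μ(s,a) = ∑_{α∈A} μ(α,s) for every s ∈ A^{r−1}; write μ₋(s) for this common (r−1)-block marginal (with the convention that for r = 1 the set A^0 is a singleton and μ₋ ≡ 1). For s ∈ A^{r−1} with μ₋(s) > 0 set q(a|s) := μ(s,a)/μ₋(s), and for s with μ₋(s) = 0 let q(·|s) be an arbitrary probability vector on A. Define u*(c,a) := μ(c)·q(a | c₂,…,c_r) for c = (c₁,…,c_r) ∈ A^r and a ∈ A. Let U(μ) be the set of stationary-consistent block laws u on A^r × A with context marginal η_u = μ. Then u* ∈ U(μ), and u* is the unique maximizer of the entropy-rate functional J on U(μ): J(u) ≤ J(u*) for every u ∈ U(μ), with equality only if u = u*. -/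

import Mathlib

open Finset

/-- Context marginal of a block law on `A^(n+1) × A` (contexts are `Fin (n+1) → A`,
so the memory length is `r = n+1 ≥ 1`). -/
noncomputable def eta {A : Type*} [Fintype A] {n : ℕ}
    (u : (Fin (n + 1) → A) → A → ℝ) (c : Fin (n + 1) → A) : ℝ :=
  ∑ a, u c a

/-- Entropy-rate functional.  In Lean, `Real.log 0 = 0` and `0 * x = 0`, so the
conventions `0·log 0 = 0` and "terms with `u(c,a) = 0` contribute `0`" hold
automatically. -/
noncomputable def J {A : Type*} [Fintype A] {n : ℕ}
    (u : (Fin (n + 1) → A) → A → ℝ) : ℝ :=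
  -∑ c, ∑ a, u c a * Real.log (u c a / eta u c)

/-- A block law: nonnegative entries with total mass one. -/
def IsBlockLaw {A : Type*} [Fintype A] {n : ℕ}
    (u : (Fin (n + 1) → A) → A → ℝ) : Prop :=
  (∀ c a, 0 ≤ u c a) ∧ ∑ c, ∑ a, u c a = 1

/-- The context `(α, d₁, …, d_{r-1})` obtained from `d = (d₁, …, d_r)` by
prepending `α` and dropping the last entry. -/
def shiftCtx {A : Type*} {n : ℕ} (α : A) (d : Fin (n + 1) → A) : Fin (n + 1) → A :=
  Fin.cons α (fun i : Fin n => d i.castSucc)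

/-- Stationary consistency:
`∑_α u((α,d₁,…,d_{r-1}), d_r) = ∑_β u(d, β)` for every block `d`. -/
def StationaryConsistent {A : Type*} [Fintype A] {n : ℕ}
    (u : (Fin (n + 1) → A) → A → ℝ) : Prop :=
  ∀ d : Fin (n + 1) → A,
    ∑ α : A, u (shiftCtx α d) (d (Fin.last n)) = ∑ β : A, u d β

/-- The feasible class determined by features `G` and targets `b`. -/
def Feasible {A : Type*} [Fintype A] {n m : ℕ}
    (G : Fin m → (Fin (n + 1) → A) → A → ℝ) (b : Fin m → ℝ)
    (u : (Fin (n + 1) → A) → A → ℝ) : Prop :=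
  IsBlockLaw u ∧ StationaryConsistent u ∧
    ∀ j, ∑ c, ∑ a, u c a * G j c a = b j

/-- The common `(r-1)`-block marginal `μ₋(s) = ∑_a μ(s,a)` of a
stationary-consistent law `μ` on `A^r` (contexts are `Fin (n+1) → A`, so
`r = n+1` and `(r-1)`-blocks are `Fin n → A`; for `r = 1`, `Fin 0 → A` is a
singleton). -/
noncomputable def muMinus {A : Type*} [Fintype A] {n : ℕ}
    (μ : (Fin (n + 1) → A) → ℝ) (s : Fin n → A) : ℝ :=
  ∑ a, μ (Fin.snoc s a)

/-- The `(r-1)`-step Markov extension `u*(c,a) = μ(c) · q(a | c₂,…,c_r)`. -/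
noncomputable def MarkovExt {A : Type*} [Fintype A] {n : ℕ}
    (μ : (Fin (n + 1) → A) → ℝ) (q : (Fin n → A) → A → ℝ)
    (c : Fin (n + 1) → A) (a : A) : ℝ :=
  μ c * q (Fin.tail c) a


/-!
Stationary consistency says exactly that the column sums `∑_α u((α,s),a)`, `s ∈ A^(r-1)`, of any
`u ∈ U(μ)` are the `r`-block probabilities `μ(s,a)`. Hence every `u ∈ U(μ)` has the same
cross-entropy `∑ u(c,a) log q(a | c₂,…,c_r)` as `u*`, and this cross-entropy is `-J(u*)`.
Consequently `J(u*) - J(u)` is the Kullback–Leibler divergence of `u` from `u*`, which is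
nonnegative and vanishes only at `u = u*` (Gibbs' inequality, applicable because `u ≪ u*`).
-/

open Real InformationTheory

section Gibbs

variable {ι : Type*} [Fintype ι] {p p' : ι → ℝ}

lemma mul_log_div_sub_add_eq_mul_klFun {x y : ℝ} (hy : y ≠ 0) :
    x * log (x / y) - x + y = y * klFun (x / y) := by
  rw [klFun_apply]
  field_simp
  ring

lemma mul_log_div_sub_add_nonneg {x y : ℝ} (hx : 0 ≤ x) (hy : 0 ≤ y) (hxy : y = 0 → x = 0) :
    0 ≤ x * log (x / y) - x + y := by
  rcases hy.eq_or_lt with rfl | hy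
  · simp [hxy rfl]
  · rw [mul_log_div_sub_add_eq_mul_klFun hy.ne']
    exact mul_nonneg hy.le (klFun_nonneg (div_nonneg hx hy.le))

lemma eq_of_mul_log_div_sub_add_eq_zero {x y : ℝ} (hx : 0 ≤ x) (hy : 0 ≤ y)
    (hxy : y = 0 → x = 0) (h : x * log (x / y) - x + y = 0) : x = y := by
  rcases hy.eq_or_lt with rfl | hy
  · exact hxy rfl
  · rw [mul_log_div_sub_add_eq_mul_klFun hy.ne', mul_eq_zero,
      klFun_eq_zero_iff (div_nonneg hx hy.le), div_eq_one_iff_eq hy.ne'] at h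
    exact h.resolve_left hy.ne'

lemma sum_mul_log_div_eq_sum_sub_add (hsum : ∑ i, p i = ∑ i, p' i) :
    ∑ i, p i * log (p i / p' i) = ∑ i, (p i * log (p i / p' i) - p i + p' i) := by
  rw [sum_add_distrib, sum_sub_distrib, hsum, sub_add_cancel]

lemma sum_mul_log_div_nonneg (hp : ∀ i, 0 ≤ p i) (hp' : ∀ i, 0 ≤ p' i)
    (habs : ∀ i, p' i = 0 → p i = 0) (hsum : ∑ i, p i = ∑ i, p' i) :
    0 ≤ ∑ i, p i * log (p i / p' i) := by
  rw [sum_mul_log_div_eq_sum_sub_add hsum]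
  exact sum_nonneg fun i _ => mul_log_div_sub_add_nonneg (hp i) (hp' i) (habs i)

lemma eq_of_sum_mul_log_div_eq_zero (hp : ∀ i, 0 ≤ p i) (hp' : ∀ i, 0 ≤ p' i)
    (habs : ∀ i, p' i = 0 → p i = 0) (hsum : ∑ i, p i = ∑ i, p' i)
    (h : ∑ i, p i * log (p i / p' i) = 0) : p = p' := by
  rw [sum_mul_log_div_eq_sum_sub_add hsum, sum_eq_zero_iff_of_nonneg fun i _ =>
    mul_log_div_sub_add_nonneg (hp i) (hp' i) (habs i)] at h
  exact funext fun i =>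
    eq_of_mul_log_div_sub_add_eq_zero (hp i) (hp' i) (habs i) (h i (mem_univ i))

end Gibbs

lemma shiftCtx_snoc {A : Type*} {n : ℕ} (α : A) (s : Fin n → A) (a : A) :
    shiftCtx α (Fin.snoc s a) = Fin.cons α s := by
  simp [shiftCtx, Fin.snoc_castSucc]

section BlockLaw

variable {A : Type*} [Fintype A] {n : ℕ}

lemma sum_pi_succ_eq_sum_sum_cons {M : Type*} [AddCommMonoid M] (f : (Fin (n + 1) → A) → M) :
    ∑ c, f c = ∑ α : A, ∑ s : Fin n → A, f (Fin.cons α s) := by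
  rw [← (Fin.consEquiv fun _ => A).sum_comp, Fintype.sum_prod_type]
  rfl

lemma le_eta {u : (Fin (n + 1) → A) → A → ℝ} (hu : ∀ c a, 0 ≤ u c a) (c : Fin (n + 1) → A)
    (a : A) : u c a ≤ eta u c :=
  single_le_sum (fun b _ => hu c b) (mem_univ a)

lemma stationaryConsistent_iff {u : (Fin (n + 1) → A) → A → ℝ} :
    StationaryConsistent u ↔ ∀ s a, ∑ α, u (Fin.cons α s) a = eta u (Fin.snoc s a) := by
  refine ⟨fun hu s a => ?_, fun hu d => ?_⟩
  · simpa only [shiftCtx_snoc, Fin.snoc_last, eta] using hu (Fin.snoc s a)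
  · rw [← Fin.snoc_init_self d]
    simpa only [shiftCtx_snoc, Fin.snoc_last, eta] using hu (Fin.init d) (d (Fin.last n))

lemma StationaryConsistent.sum_mul_tail {u : (Fin (n + 1) → A) → A → ℝ}
    (hu : StationaryConsistent u) (g : (Fin n → A) → A → ℝ) :
    ∑ c, ∑ a, u c a * g (Fin.tail c) a = ∑ s, ∑ a, eta u (Fin.snoc s a) * g s a := by
  rw [sum_pi_succ_eq_sum_sum_cons, sum_comm]
  refine sum_congr rfl fun s _ => ?_
  simp only [Fin.tail_cons]
  rw [sum_comm]
  refine sum_congr rfl fun a _ => ?_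
  rw [← sum_mul, stationaryConsistent_iff.mp hu s a]

variable {μ : (Fin (n + 1) → A) → ℝ} {q : (Fin n → A) → A → ℝ}

lemma muMinus_nonneg (hμ : ∀ c, 0 ≤ μ c) (s : Fin n → A) : 0 ≤ muMinus μ s :=
  sum_nonneg fun _ _ => hμ _

lemma le_muMinus_snoc (hμ : ∀ c, 0 ≤ μ c) (s : Fin n → A) (a : A) :
    μ (Fin.snoc s a) ≤ muMinus μ s :=
  single_le_sum (fun _ _ => hμ _) (mem_univ a)

lemma muMinus_mul_cond (hμ : ∀ c, 0 ≤ μ c)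
    (hqpos : ∀ s, 0 < muMinus μ s → ∀ a, q s a = μ (Fin.snoc s a) / muMinus μ s)
    (s : Fin n → A) (a : A) : muMinus μ s * q s a = μ (Fin.snoc s a) := by
  rcases (muMinus_nonneg hμ s).eq_or_lt with h | h
  · rw [← h, zero_mul]
    exact le_antisymm (h ▸ le_muMinus_snoc hμ s a) (hμ _) |>.symm
  · rw [hqpos s h a, mul_div_cancel₀ _ h.ne']

lemma cond_nonneg (hμ : ∀ c, 0 ≤ μ c)
    (hqpos : ∀ s, 0 < muMinus μ s → ∀ a, q s a = μ (Fin.snoc s a) / muMinus μ s)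
    (hqzero : ∀ s, muMinus μ s = 0 → (∀ a, 0 ≤ q s a) ∧ ∑ a, q s a = 1)
    (s : Fin n → A) (a : A) : 0 ≤ q s a := by
  rcases (muMinus_nonneg hμ s).eq_or_lt with h | h
  · exact (hqzero s h.symm).1 a
  · rw [hqpos s h a]
    exact div_nonneg (hμ _) h.le

lemma sum_cond_eq_one (hμ : ∀ c, 0 ≤ μ c)
    (hqpos : ∀ s, 0 < muMinus μ s → ∀ a, q s a = μ (Fin.snoc s a) / muMinus μ s)
    (hqzero : ∀ s, muMinus μ s = 0 → (∀ a, 0 ≤ q s a) ∧ ∑ a, q s a = 1)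
    (s : Fin n → A) : ∑ a, q s a = 1 := by
  rcases (muMinus_nonneg hμ s).eq_or_lt with h | h
  · exact (hqzero s h.symm).2
  · rw [sum_congr rfl fun a _ => hqpos s h a, ← sum_div]
    exact div_self h.ne'

lemma eta_markovExt (hq : ∀ s, ∑ a, q s a = 1) (c : Fin (n + 1) → A) :
    eta (MarkovExt μ q) c = μ c := by
  simp only [eta, MarkovExt, ← mul_sum, hq, mul_one]

lemma isBlockLaw_markovExt (hμ : (∀ c, 0 ≤ μ c) ∧ ∑ c, μ c = 1) (hq0 : ∀ s a, 0 ≤ q s a)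
    (hq1 : ∀ s, ∑ a, q s a = 1) : IsBlockLaw (MarkovExt μ q) :=
  ⟨fun c a => mul_nonneg (hμ.1 c) (hq0 _ a),
    (sum_congr rfl fun c _ => eta_markovExt hq1 c).trans hμ.2⟩

lemma stationaryConsistent_markovExt (hμ : ∀ c, 0 ≤ μ c)
    (hμstat : ∀ s : Fin n → A, ∑ a, μ (Fin.snoc s a) = ∑ α, μ (Fin.cons α s))
    (hqpos : ∀ s, 0 < muMinus μ s → ∀ a, q s a = μ (Fin.snoc s a) / muMinus μ s)
    (hq1 : ∀ s, ∑ a, q s a = 1) : StationaryConsistent (MarkovExt μ q) := by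
  refine stationaryConsistent_iff.mpr fun s a => ?_
  simp only [MarkovExt, Fin.tail_cons]
  rw [← sum_mul, ← hμstat, ← muMinus, muMinus_mul_cond hμ hqpos, eta_markovExt hq1]

lemma eq_zero_of_markovExt_eq_zero (hμ : ∀ c, 0 ≤ μ c)
    (hqpos : ∀ s, 0 < muMinus μ s → ∀ a, q s a = μ (Fin.snoc s a) / muMinus μ s)
    {u : (Fin (n + 1) → A) → A → ℝ} (hu0 : ∀ c a, 0 ≤ u c a) (hust : StationaryConsistent u)
    (hueta : ∀ c, eta u c = μ c) {c : Fin (n + 1) → A} {a : A}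
    (h : MarkovExt μ q c a = 0) : u c a = 0 := by
  refine le_antisymm ?_ (hu0 c a)
  rcases (hμ c).eq_or_lt with hc | hc
  · exact hc ▸ hueta c ▸ le_eta hu0 c a
  have hq : q (Fin.tail c) a = 0 := (mul_eq_zero.mp h).resolve_left hc.ne'
  have hsnoc : μ (Fin.snoc (Fin.tail c) a) = 0 := by
    rw [← muMinus_mul_cond hμ hqpos, hq, mul_zero]
  calc u c a = u (Fin.cons (c 0) (Fin.tail c)) a := by rw [Fin.cons_self_tail]
    _ ≤ ∑ α, u (Fin.cons α (Fin.tail c)) a :=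
      single_le_sum (f := fun α => u (Fin.cons α (Fin.tail c)) a) (fun _ _ => hu0 _ _)
        (mem_univ (c 0))
    _ = 0 := by rw [stationaryConsistent_iff.mp hust, hueta, hsnoc]

lemma J_markovExt (hq : ∀ s, ∑ a, q s a = 1) :
    J (MarkovExt μ q) = -∑ c, ∑ a, MarkovExt μ q c a * log (q (Fin.tail c) a) := by
  refine congrArg Neg.neg (sum_congr rfl fun c _ => sum_congr rfl fun a _ => ?_)
  rw [eta_markovExt hq]
  rcases eq_or_ne (μ c) 0 with hc | hc
  · simp [MarkovExt, hc]
  · rw [MarkovExt, mul_div_cancel_left₀ _ hc]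

lemma J_markovExt_sub_J (hμ : ∀ c, 0 ≤ μ c)
    (hμstat : ∀ s : Fin n → A, ∑ a, μ (Fin.snoc s a) = ∑ α, μ (Fin.cons α s))
    (hqpos : ∀ s, 0 < muMinus μ s → ∀ a, q s a = μ (Fin.snoc s a) / muMinus μ s)
    (hq1 : ∀ s, ∑ a, q s a = 1)
    {u : (Fin (n + 1) → A) → A → ℝ} (hu0 : ∀ c a, 0 ≤ u c a) (hust : StationaryConsistent u)
    (hueta : ∀ c, eta u c = μ c) :
    J (MarkovExt μ q) - J u = ∑ c, ∑ a, u c a * log (u c a / MarkovExt μ q c a) := by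
  have hcross : ∀ v : (Fin (n + 1) → A) → A → ℝ, StationaryConsistent v →
      (∀ c, eta v c = μ c) → ∑ c, ∑ a, v c a * log (q (Fin.tail c) a)
        = ∑ s, ∑ a, μ (Fin.snoc s a) * log (q s a) := fun v hv hveta => by
    rw [hv.sum_mul_tail fun s a => log (q s a)]
    simp only [hveta]
  rw [J_markovExt hq1, hcross _ (stationaryConsistent_markovExt hμ hμstat hqpos hq1)
    (eta_markovExt hq1), ← hcross u hust hueta, J, neg_sub_neg, ← sum_sub_distrib]
  refine sum_congr rfl fun c _ => ?_
  rw [← sum_sub_distrib]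
  refine sum_congr rfl fun a _ => ?_
  rcases (hu0 c a).eq_or_lt with h | h
  · simp [← h]
  have hstar : MarkovExt μ q c a ≠ 0 := fun h0 =>
    h.ne' (eq_zero_of_markovExt_eq_zero hμ hqpos hu0 hust hueta h0)
  have hμc : μ c ≠ 0 := left_ne_zero_of_mul hstar
  have hqc : q (Fin.tail c) a ≠ 0 := right_ne_zero_of_mul hstar
  rw [hueta, MarkovExt, log_div h.ne' hμc, log_div h.ne' (mul_ne_zero hμc hqc),
    log_mul hμc hqc]
  ring

end BlockLaw

theorem stmt8_general {A : Type*} [Fintype A] {n : ℕ}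
    (μ : (Fin (n + 1) → A) → ℝ)
    (hμ : (∀ c, 0 ≤ μ c) ∧ ∑ c, μ c = 1)
    (hμstat : ∀ s : Fin n → A, ∑ a, μ (Fin.snoc s a) = ∑ α, μ (Fin.cons α s))
    (q : (Fin n → A) → A → ℝ)
    (hqpos : ∀ s, 0 < muMinus μ s → ∀ a, q s a = μ (Fin.snoc s a) / muMinus μ s)
    (hqzero : ∀ s, muMinus μ s = 0 → (∀ a, 0 ≤ q s a) ∧ ∑ a, q s a = 1) :
    (IsBlockLaw (MarkovExt μ q) ∧ StationaryConsistent (MarkovExt μ q) ∧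
      ∀ c, eta (MarkovExt μ q) c = μ c) ∧
    (∀ u, (IsBlockLaw u ∧ StationaryConsistent u ∧ ∀ c, eta u c = μ c) →
      J u ≤ J (MarkovExt μ q) ∧ (J u = J (MarkovExt μ q) → u = MarkovExt μ q)) := by
  have hq0 := cond_nonneg hμ.1 hqpos hqzero
  have hq1 := sum_cond_eq_one hμ.1 hqpos hqzero
  have hstar := isBlockLaw_markovExt hμ hq0 hq1
  refine ⟨⟨hstar, stationaryConsistent_markovExt hμ.1 hμstat hqpos hq1, eta_markovExt hq1⟩, ?_⟩
  rintro u ⟨⟨hu0, hu1⟩, hust, hueta⟩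
  have hkl := J_markovExt_sub_J hμ.1 hμstat hqpos hq1 hu0 hust hueta
  have hp : ∀ x, 0 ≤ Function.uncurry u x := fun x => hu0 x.1 x.2
  have hp' : ∀ x, 0 ≤ Function.uncurry (MarkovExt μ q) x := fun x => hstar.1 x.1 x.2
  have habs : ∀ x, Function.uncurry (MarkovExt μ q) x = 0 → Function.uncurry u x = 0 :=
    fun _ => eq_zero_of_markovExt_eq_zero hμ.1 hqpos hu0 hust hueta
  have hsum : ∑ x, Function.uncurry u x = ∑ x, Function.uncurry (MarkovExt μ q) x := by
    simp only [Fintype.sum_prod_type, Function.uncurry_apply_pair, hu1, hstar.2]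
  have hgibbs := sum_mul_log_div_nonneg hp hp' habs hsum
  have hgibbs_eq := eq_of_sum_mul_log_div_eq_zero hp hp' habs hsum
  simp only [Fintype.sum_prod_type, Function.uncurry_apply_pair] at hgibbs hgibbs_eq
  exact ⟨by linarith, fun h => Function.uncurry_injective (hgibbs_eq (by linarith))⟩

/-- For a stationary-consistent probability law `μ` on `A^r`, with
`q(a|s) = μ(s,a)/μ₋(s)` where `μ₋(s) > 0` and `q(·|s)` an arbitrary probability
vector elsewhere, the Markov extension `u*(c,a) = μ(c)·q(a|c₂,…,c_r)` lies in
`U(μ)` and is the unique maximizer of `J` on `U(μ)`. -/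
theorem stmt8 {A : Type*} [Fintype A] [Nonempty A] {n : ℕ}
    (μ : (Fin (n + 1) → A) → ℝ)
    (hμ : (∀ c, 0 ≤ μ c) ∧ ∑ c, μ c = 1)
    (hμstat : ∀ s : Fin n → A, ∑ a, μ (Fin.snoc s a) = ∑ α, μ (Fin.cons α s))
    (q : (Fin n → A) → A → ℝ)
    (hqpos : ∀ s, 0 < muMinus μ s → ∀ a, q s a = μ (Fin.snoc s a) / muMinus μ s)
    (hqzero : ∀ s, muMinus μ s = 0 → (∀ a, 0 ≤ q s a) ∧ ∑ a, q s a = 1) :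
    (IsBlockLaw (MarkovExt μ q) ∧ StationaryConsistent (MarkovExt μ q) ∧
      ∀ c, eta (MarkovExt μ q) c = μ c) ∧
    (∀ u, (IsBlockLaw u ∧ StationaryConsistent u ∧ ∀ c, eta u c = μ c) →
      J u ≤ J (MarkovExt μ q) ∧ (J u = J (MarkovExt μ q) → u = MarkovExt μ q)) :=
  stmt8_general μ hμ hμstat q hqpos hqzero
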